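/- arXiv:2408.05282 — 2 statements merged into one kernel-verified Lean document; each statement's English description precedes it below -/
import Mathlib

section
/- Let H be a canonical 2-edge cover of a graph G. Then cost(H) ≤ (5/4)·|E(H)|. -/
open SimpleGraph

open scoped Classical

namespace ECSS

/-! ### Generic graph notions -/

section Generic

variable {W : Type*}

/-- The number of connected components of a graph. -/
noncomputable def numComponents (Γ : SimpleGraph W) : ℕ :=
  Nat.card Γ.ConnectedComponent

/-- Deleting the vertex set `S` increases the number of connected components. -/
def IsCutSet (Γ : SimpleGraph W) (S : Set W) : Prop :=
  numComponents Γ < numComponents (Γ.induce Sᶜ)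

/-- A `k`-vertex cut: a set of `k` vertices whose deletion increases the number of
connected components. -/
def IsVertexCut (Γ : SimpleGraph W) (S : Set W) (k : ℕ) : Prop :=
  S.ncard = k ∧ IsCutSet Γ S

/-- 2-vertex-connected: connected and with no cut vertex. -/
def TwoVertexConnected (Γ : SimpleGraph W) : Prop :=
  Γ.Connected ∧ ∀ v : W, ¬ IsCutSet Γ {v}

/-- 2-edge-connected: connected, and still connected after deleting any single edge. -/
def IsTwoEdgeConnected (Γ : SimpleGraph W) : Prop :=
  Γ.Connected ∧ ∀ e ∈ Γ.edgeSet, (Γ.deleteEdges {e}).Connected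

/-- A small 3-vertex cut: deleting it leaves exactly two connected components,
one of which has at most 6 vertices. -/
def IsSmall3Cut (Γ : SimpleGraph W) (S : Set W) : Prop :=
  IsVertexCut Γ S 3 ∧ numComponents (Γ.induce Sᶜ) = 2 ∧
    ∃ c : (Γ.induce Sᶜ).ConnectedComponent, c.supp.ncard ≤ 6

/-- A large 3-vertex cut: a 3-vertex cut that is not small. -/
def IsLarge3Cut (Γ : SimpleGraph W) (S : Set W) : Prop :=
  IsVertexCut Γ S 3 ∧ ¬ IsSmall3Cut Γ S

/-- An isolating 2-vertex cut: deleting it leaves exactly two connected components,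
one of which has size 1. -/
def IsIsolating2Cut (Γ : SimpleGraph W) (S : Set W) : Prop :=
  IsVertexCut Γ S 2 ∧ numComponents (Γ.induce Sᶜ) = 2 ∧
    ∃ c : (Γ.induce Sᶜ).ConnectedComponent, c.supp.ncard = 1

/-- A non-isolating 2-vertex cut: a 2-vertex cut that is not isolating. -/
def IsNonIsolating2Cut (Γ : SimpleGraph W) (S : Set W) : Prop :=
  IsVertexCut Γ S 2 ∧ ¬ IsIsolating2Cut Γ S

/-- An irrelevant edge `xy`: an edge such that `{x, y}` is a 2-vertex cut. -/
def IsIrrelevantEdge (Γ : SimpleGraph W) (x y : W) : Prop :=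
  Γ.Adj x y ∧ IsVertexCut Γ {x, y} 2

/-- A matching of size `k` between `V1` and `V2`: `k` pairwise vertex-disjoint edges,
each with one endpoint in `V1` and the other in `V2`. -/
def HasMatchingBetween (Γ : SimpleGraph W) (V1 V2 : Set W) (k : ℕ) : Prop :=
  ∃ f g : Fin k → W,
    (∀ i, f i ∈ V1 ∧ g i ∈ V2 ∧ Γ.Adj (f i) (g i)) ∧
    ∀ i j, i ≠ j → f i ≠ f j ∧ g i ≠ g j ∧ f i ≠ g j ∧ g i ≠ f j

/-- A non-trivial segment: a maximal 2-node-connected (induced) subgraph with at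
least 3 nodes. -/
def IsNontrivialSegment (Γ : SimpleGraph W) (S : Set W) : Prop :=
  3 ≤ S.ncard ∧ TwoVertexConnected (Γ.induce S) ∧
    ∀ S' : Set W, S ⊆ S' → TwoVertexConnected (Γ.induce S') → S' = S

/-- A trivial segment: a node that is not contained in any non-trivial segment. -/
def IsTrivialSegment (Γ : SimpleGraph W) (A : W) : Prop :=
  ∀ S : Set W, IsNontrivialSegment Γ S → A ∉ S

/-- A pendant node: a node adjacent to exactly one other node. -/
def IsPendantNode (Γ : SimpleGraph W) (A : W) : Prop :=
  (Γ.neighborSet A).ncard = 1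

/-- The graph `Γ` is a path from `P` to `Q` (of length at least 1):
there is a path walk from `P` to `Q` visiting every vertex and using every edge. -/
def IsPathGraphWithEnds (Γ : SimpleGraph W) (P Q : W) : Prop :=
  ∃ p : Γ.Walk P Q, p.IsPath ∧ 1 ≤ p.length ∧ (∀ n : W, n ∈ p.support) ∧
    ∀ e ∈ Γ.edgeSet, e ∈ p.edges

end Generic

/-! ### Subgraph notions -/

variable {V : Type*}

/-- A subgraph is 2-edge-connected: connected and still connected after deleting any
single edge. -/
def SubTwoEC {G : SimpleGraph V} (K : G.Subgraph) : Prop :=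
  K.Connected ∧ ∀ e ∈ K.edgeSet, (K.deleteEdges {e}).Connected

/-- A 2-edge-connected spanning subgraph (2-ECSS) of `G`. -/
def IsTwoECSS (G : SimpleGraph V) (H : G.Subgraph) : Prop :=
  H.IsSpanning ∧ SubTwoEC H

/-- The minimum number of edges of a 2-ECSS of `G`. -/
noncomputable def opt (G : SimpleGraph V) : ℕ :=
  sInf {n : ℕ | ∃ H : G.Subgraph, IsTwoECSS G H ∧ H.edgeSet.ncard = n}

/-- `C` is a (maximal) connected component of `H`. -/
def IsComponent {G : SimpleGraph V} (H C : G.Subgraph) : Prop :=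
  C ≤ H ∧ C.Connected ∧ ∀ C' : G.Subgraph, C ≤ C' → C' ≤ H → C'.Connected → C' = C

/-- `B` is a block of `C`: a maximal 2-edge-connected subgraph. -/
def IsBlock {G : SimpleGraph V} (C B : G.Subgraph) : Prop :=
  B ≤ C ∧ SubTwoEC B ∧ ∀ B' : G.Subgraph, B ≤ B' → B' ≤ C → SubTwoEC B' → B' = B

/-- `e` is a bridge of the subgraph `C`: deleting it disconnects its endpoints. -/
def IsBridgeIn {G : SimpleGraph V} (C : G.Subgraph) (e : Sym2 V) : Prop :=
  e ∈ C.edgeSet ∧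
    ∀ a b : V, s(a, b) = e → ¬ (C.deleteEdges {e}).spanningCoe.Reachable a b

/-- The subgraph contains a bridge ("complex" when it is a component). -/
def HasBridge {G : SimpleGraph V} (C : G.Subgraph) : Prop :=
  ∃ e, IsBridgeIn C e

/-- The subgraph has no bridges. -/
def Bridgeless {G : SimpleGraph V} (H : G.Subgraph) : Prop :=
  ∀ e : Sym2 V, ¬ IsBridgeIn H e

/-- The subgraph `C` is a cycle on `i` vertices (connected and 2-regular). -/
def IsCycleOn {G : SimpleGraph V} (C : G.Subgraph) (i : ℕ) : Prop :=
  C.Connected ∧ C.verts.ncard = i ∧ ∀ v ∈ C.verts, (C.neighborSet v).ncard = 2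

/-- A block `B` of a component `C` is pendant if `C` minus the vertices of `B`
is connected. -/
def IsPendant {G : SimpleGraph V} (C B : G.Subgraph) : Prop :=
  (C.deleteVerts B.verts).Connected

/-- A 2-edge cover: a spanning subgraph in which every vertex has degree at least 2. -/
def IsTwoEdgeCover {G : SimpleGraph V} (H : G.Subgraph) : Prop :=
  H.IsSpanning ∧ ∀ v : V, 2 ≤ (H.neighborSet v).ncard

/-- A 2-edge cover is triangle-free if no component is a triangle. -/
def IsTriangleFree {G : SimpleGraph V} (H : G.Subgraph) : Prop :=
  ∀ C : G.Subgraph, IsComponent H C → ¬ IsCycleOn C 3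

/-- A canonical 2-edge cover: every non-complex component is a cycle on `i` vertices
for some `4 ≤ i ≤ 7` or has at least 8 edges, and in every complex component each
pendant block has at least 6 edges and each non-pendant block has at least 4 edges. -/
def IsCanonical {G : SimpleGraph V} (H : G.Subgraph) : Prop :=
  (∀ C : G.Subgraph, IsComponent H C → ¬ HasBridge C →
      (∃ i, 4 ≤ i ∧ i ≤ 7 ∧ IsCycleOn C i) ∨ 8 ≤ C.edgeSet.ncard) ∧
  (∀ C : G.Subgraph, IsComponent H C → HasBridge C → ∀ B : G.Subgraph, IsBlock C B →
      (IsPendant C B → 6 ≤ B.edgeSet.ncard) ∧ (¬ IsPendant C B → 4 ≤ B.edgeSet.ncard))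

/-- Credit of a single component: a complex component gets its component credit 1,
plus 1 for each block, plus 1/4 for each bridge; a 2EC component with at least 8
edges gets 2; a 2EC component that is a cycle `C_i` gets `i/4` (its number of edges
over 4). -/
noncomputable def componentCredit {G : SimpleGraph V} (C : G.Subgraph) : ℚ :=
  if HasBridge C then
    1 + ({B : G.Subgraph | IsBlock C B}.ncard : ℚ)
      + ({e : Sym2 V | IsBridgeIn C e}.ncard : ℚ) / 4
  else if 8 ≤ C.edgeSet.ncard then 2
  else (C.edgeSet.ncard : ℚ) / 4

/-- Total credit of a 2-edge cover: sum of the credits of its components. -/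
noncomputable def credit {G : SimpleGraph V} (H : G.Subgraph) : ℚ :=
  ∑ᶠ C ∈ {C : G.Subgraph | IsComponent H C}, componentCredit C

/-- Cost of a 2-edge cover: number of edges plus total credit. -/
noncomputable def cost {G : SimpleGraph V} (H : G.Subgraph) : ℚ :=
  (H.edgeSet.ncard : ℚ) + credit H

/-- An `α`-contractible subgraph: a 2-edge-connected subgraph `C` (with at least one
edge) such that every 2-ECSS of `G` contains at least `|E(C)|/α` edges with both
endpoints in `V(C)`. -/
def IsContractible (α : ℚ) (G : SimpleGraph V) (C : G.Subgraph) : Prop :=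
  SubTwoEC C ∧ ∀ H : G.Subgraph, IsTwoECSS G H →
    (C.edgeSet.ncard : ℚ) / α ≤ ({e ∈ H.edgeSet | ∀ x ∈ e, x ∈ C.verts}.ncard : ℚ)

/-- An `(α, ε)`-structured graph: simple (automatic), 2-vertex-connected, with at
least `4/ε` vertices, and containing no `α`-contractible subgraph with at most `2/ε`
edges, no irrelevant edge, no non-isolating 2-vertex cut, and no large 3-vertex cut. -/
def IsStructured (α ε : ℚ) (G : SimpleGraph V) : Prop :=
  TwoVertexConnected G ∧ (4 / ε ≤ (Nat.card V : ℚ)) ∧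
  (∀ C : G.Subgraph, C.edgeSet.Nonempty → (C.edgeSet.ncard : ℚ) ≤ 2 / ε →
      ¬ IsContractible α G C) ∧
  (∀ x y : V, ¬ IsIrrelevantEdge G x y) ∧
  (∀ S : Set V, ¬ IsNonIsolating2Cut G S) ∧
  (∀ S : Set V, ¬ IsLarge3Cut G S)

/-! ### The component graph -/

/-- The component graph `Ĝ_H`: nodes are the components of `H`, two nodes being
adjacent if some edge of `G` joins the corresponding components (self-loops are
discarded). -/
def compGraph {G : SimpleGraph V} (H : G.Subgraph) :
    SimpleGraph {C : G.Subgraph // IsComponent H C} where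
  Adj A B := A ≠ B ∧ ∃ a b : V, a ∈ A.1.verts ∧ b ∈ B.1.verts ∧ G.Adj a b
  symm := by
    refine ⟨?_⟩
    rintro A B ⟨hne, a, b, ha, hb, hab⟩
    exact ⟨hne.symm, b, a, hb, ha, hab.symm⟩
  loopless := by
    refine ⟨?_⟩
    rintro A ⟨hne, -⟩
    exact hne rfl

/-- A cycle in the component graph `Ĝ_H` (as a multigraph), given by pairwise
distinct components `D i` and pairwise distinct edges of `G`, the `i`-th edge
joining a vertex `a i` of `D i` to a vertex `b i` of `D (i+1)`. -/
def IsCompCycle {G : SimpleGraph V} (H : G.Subgraph) {m : ℕ}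
    (D : Fin (m + 2) → G.Subgraph) (a b : Fin (m + 2) → V) : Prop :=
  Function.Injective D ∧ (∀ i, IsComponent H (D i)) ∧
  (∀ i, a i ∈ (D i).verts ∧ b i ∈ (D (i + 1)).verts ∧ G.Adj (a i) (b i)) ∧
  Function.Injective fun i => s(a i, b i)

/-! ### Contracting the 2-edge-connected components: solution types -/

/-- `x` and `y` lie in the same 2-edge-connected component of `K`: they are
reachable, and remain reachable after the deletion of any single edge. -/
def SameTwoEC {G : SimpleGraph V} (K : G.Subgraph) (x y : V) : Prop :=
  K.spanningCoe.Reachable x y ∧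
    ∀ e ∈ K.edgeSet, (K.deleteEdges {e}).spanningCoe.Reachable x y

/-- The setoid on the vertices of `K` identifying vertices in the same
2-edge-connected component. -/
def twoECSetoid {G : SimpleGraph V} (K : G.Subgraph) : Setoid K.verts where
  r x y := SameTwoEC K x.1 y.1
  iseqv := by
    constructor
    · exact fun x => ⟨Reachable.refl _, fun e _ => Reachable.refl _⟩
    · exact fun h => ⟨h.1.symm, fun e he => (h.2 e he).symm⟩
    · exact fun h h' => ⟨h.1.trans h'.1, fun e he => (h.2 e he).trans (h'.2 e he)⟩

/-- The super-nodes: 2-edge-connected components of `K`, as a quotient. -/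
def SNode {G : SimpleGraph V} (K : G.Subgraph) :=
  Quotient (twoECSetoid K)

/-- The graph obtained from `K` by contracting each 2-edge-connected component into
a single super-node. -/
def contractTwoEC {G : SimpleGraph V} (K : G.Subgraph) : SimpleGraph (SNode K) where
  Adj P Q := P ≠ Q ∧ ∃ x y : K.verts,
    Quotient.mk (twoECSetoid K) x = P ∧ Quotient.mk (twoECSetoid K) y = Q ∧ K.Adj x.1 y.1
  symm := by
    refine ⟨?_⟩
    rintro P Q ⟨hne, x, y, hx, hy, hxy⟩
    exact ⟨hne.symm, y, x, hy, hx, hxy.symm⟩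
  loopless := by
    refine ⟨?_⟩
    rintro P ⟨hne, -⟩
    exact hne rfl

/-- The super-node containing a vertex. -/
def cls {G : SimpleGraph V} (K : G.Subgraph) (x : K.verts) : SNode K :=
  Quotient.mk (twoECSetoid K) x

/-- Type A: the contraction is a single super-node. -/
def TypeA {G : SimpleGraph V} (K : G.Subgraph) (u v w : K.verts) : Prop :=
  ∀ n : SNode K, n = cls K u

/-- Type B1: the contraction is a path `C₁ - ⋯ - C_k` of length at least 1 with
`u, v, w ∈ C₁ ∪ C_k` and at most two of `u, v, w` in each of `C₁` and `C_k`. -/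
def TypeB1 {G : SimpleGraph V} (K : G.Subgraph) (u v w : K.verts) : Prop :=
  ∃ P Q : SNode K, IsPathGraphWithEnds (contractTwoEC K) P Q ∧
    (cls K u = P ∨ cls K u = Q) ∧ (cls K v = P ∨ cls K v = Q) ∧
    (cls K w = P ∨ cls K w = Q) ∧
    ¬ (cls K u = P ∧ cls K v = P ∧ cls K w = P) ∧
    ¬ (cls K u = Q ∧ cls K v = Q ∧ cls K w = Q)

/-- Type B2: the contraction consists of two isolated super-nodes, each containing
at most two of `u, v, w`. -/
def TypeB2 {G : SimpleGraph V} (K : G.Subgraph) (u v w : K.verts) : Prop :=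
  ∃ P Q : SNode K, P ≠ Q ∧ (∀ n : SNode K, n = P ∨ n = Q) ∧
    (∀ P' Q' : SNode K, ¬ (contractTwoEC K).Adj P' Q') ∧
    ¬ (cls K u = cls K v ∧ cls K v = cls K w)

/-- Type C1: the contraction is a tree and `u, v, w` lie in three distinct
super-nodes. -/
def TypeC1 {G : SimpleGraph V} (K : G.Subgraph) (u v w : K.verts) : Prop :=
  (contractTwoEC K).IsTree ∧
    cls K u ≠ cls K v ∧ cls K u ≠ cls K w ∧ cls K v ≠ cls K w

/-- Type C2: the contraction is a path of length at least 1 together with one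
isolated super-node, such that each of the two path ends and the isolated super-node
contains exactly one of `u, v, w`. -/
def TypeC2 {G : SimpleGraph V} (K : G.Subgraph) (u v w : K.verts) : Prop :=
  ∃ P Q R : SNode K,
    (∃ p : (contractTwoEC K).Walk P Q, p.IsPath ∧ 1 ≤ p.length ∧ R ∉ p.support ∧
      (∀ n : SNode K, n ∈ p.support ∨ n = R) ∧
      ∀ e ∈ (contractTwoEC K).edgeSet, e ∈ p.edges) ∧
    cls K u ≠ cls K v ∧ cls K u ≠ cls K w ∧ cls K v ≠ cls K w ∧
    ({cls K u, cls K v, cls K w} : Set (SNode K)) = {P, Q, R}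

/-- Type C3: the contraction consists of the three isolated super-nodes of
`u`, `v` and `w`. -/
def TypeC3 {G : SimpleGraph V} (K : G.Subgraph) (u v w : K.verts) : Prop :=
  cls K u ≠ cls K v ∧ cls K u ≠ cls K w ∧ cls K v ≠ cls K w ∧
  (∀ n : SNode K, n = cls K u ∨ n = cls K v ∨ n = cls K w) ∧
  ∀ P Q : SNode K, ¬ (contractTwoEC K).Adj P Q

/-- `K` is of one of the six solution types with respect to `u, v, w`. -/
def OfAnyType {G : SimpleGraph V} (K : G.Subgraph) (u v w : K.verts) : Prop :=
  TypeA K u v w ∨ TypeB1 K u v w ∨ TypeB2 K u v w ∨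
    TypeC1 K u v w ∨ TypeC2 K u v w ∨ TypeC3 K u v w

/-! ### Sides of a 3-vertex cut, contracted sides, and related helpers -/

/-- The induced subgraph `G[V₁ ∪ {u,v,w}]` (as a subgraph of `G`). -/
def sideOne (G : SimpleGraph V) (V1 : Set V) (u v w : V) : G.Subgraph :=
  (⊤ : G.Subgraph).induce (V1 ∪ {u, v, w})

/-- The induced subgraph `G[V₂ ∪ {u,v,w}]` minus the edges `uv`, `vw`, `uw`. -/
def sideTwo (G : SimpleGraph V) (V2 : Set V) (u v w : V) : G.Subgraph :=
  ((⊤ : G.Subgraph).induce (V2 ∪ {u, v, w})).deleteEdges {s(u, v), s(v, w), s(u, w)}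

/-- The connected component of the subgraph `K` containing the vertex `z`. -/
def compOf {G : SimpleGraph V} (K : G.Subgraph) (z : V) : G.Subgraph where
  verts := {y | y ∈ K.verts ∧ K.spanningCoe.Reachable z y}
  Adj x y := K.Adj x y ∧ K.spanningCoe.Reachable z x
  adj_sub := fun h => K.adj_sub h.1
  edge_vert := fun h => ⟨K.edge_vert h.1, h.2⟩
  symm := by
    refine ⟨?_⟩
    rintro x y ⟨hxy, hzx⟩
    exact ⟨hxy.symm, hzx.trans (SimpleGraph.Adj.reachable (by exact hxy))⟩

/-- There is an edge of `Gi` that is not an edge of `Hi` between `A` and `B`. -/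
def CrossEdge {G : SimpleGraph V} (Gi Hi : G.Subgraph) (A B : Set V) : Prop :=
  ∃ a b : V, a ∈ A ∧ b ∈ B ∧ Gi.Adj a b ∧ ¬ Hi.Adj a b

/-- Claim (1) of the spanning-tree lemma for 3-vertex cuts. -/
def ClaimOne {G : SimpleGraph V} (Gi Hi : G.Subgraph) (x : V) : Prop :=
  compOf Hi x ≠ Hi →
    ∃ a b : V, a ∈ (compOf Hi x).verts ∧ b ∈ Hi.verts ∧ b ∉ (compOf Hi x).verts ∧
      Gi.Adj a b ∧ ¬ Hi.Adj a b

/-- Claim (2) of the spanning-tree lemma for 3-vertex cuts. -/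
def ClaimTwo {G : SimpleGraph V} (Gi Hi : G.Subgraph) (u v w : V) : Prop :=
  (Disjoint (compOf Hi u).verts (compOf Hi v).verts ∧
      Disjoint (compOf Hi v).verts (compOf Hi w).verts ∧
      Disjoint (compOf Hi u).verts (compOf Hi w).verts) →
    (CrossEdge Gi Hi (compOf Hi u).verts (compOf Hi v).verts ∧
        CrossEdge Gi Hi (compOf Hi v).verts (compOf Hi w).verts) ∨
      (CrossEdge Gi Hi (compOf Hi v).verts (compOf Hi w).verts ∧
        CrossEdge Gi Hi (compOf Hi u).verts (compOf Hi w).verts) ∨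
      (CrossEdge Gi Hi (compOf Hi u).verts (compOf Hi v).verts ∧
        CrossEdge Gi Hi (compOf Hi u).verts (compOf Hi w).verts)

/-- The condition of the gluing lemma: every edge of `Hi` is in a 2-edge-connected
component of `Hi`, or lies on an `x`-`y` path in `Hi` for distinct
`x, y ∈ {u, v, w}` such that `x` and `y` are also connected in `Hj`. -/
def EdgeCond {G : SimpleGraph V} (Hi Hj : G.Subgraph) (u v w : V) : Prop :=
  ∀ a b : V, Hi.Adj a b →
    SameTwoEC Hi a b ∨
      ∃ x ∈ ({u, v, w} : Set V), ∃ y ∈ ({u, v, w} : Set V), x ≠ y ∧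
        (∃ p : Hi.spanningCoe.Walk x y, p.IsPath ∧ s(a, b) ∈ p.edges) ∧
        Hj.spanningCoe.Reachable x y

/-- The set of all potential edges among a vertex set `S` (used to model the
contraction of `S` into a single vertex). -/
def cliqueOn (S : Set V) : Set (Sym2 V) :=
  {e | ∃ a ∈ S, ∃ b ∈ S, a ≠ b ∧ e = s(a, b)}

/-- The edge set `K` forms a 2-edge-connected spanning subgraph of the graph on `Wt`
with the set `S ⊆ Wt` contracted into a single vertex: modelled by making `S` into a
blob using `cliqueOn S` (whose edges are never deleted). -/
def ContractedTwoECSS (Wt S : Set V) (K : Set (Sym2 V)) : Prop :=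
  ((SimpleGraph.fromEdgeSet (K ∪ cliqueOn S)).induce Wt).Connected ∧
  ∀ e ∈ K, ((SimpleGraph.fromEdgeSet ((K \ {e}) ∪ cliqueOn S)).induce Wt).Connected

end ECSS

/-!
Each component is charged against a quarter of its own edges. For a 2-edge-connected component
this is immediate from the credit rule. A complex component `C` with `b` blocks and `r` bridges
needs `4 + 4b + r ≤ |E(C)|`: its blocks are edge-disjoint and contain no bridge, each has at least
4 edges, and two of them are pendant and so have at least 6. The two pendant blocks are leaves of
the block tree of `C` (blocks, adjacent when joined by an edge of `C`), which is acyclic because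
closing a chain of blocks by one more edge would give a 2-edge-connected subgraph strictly larger
than a block.
-/

namespace SimpleGraph.Subgraph

variable {V : Type*} {G : SimpleGraph V}

lemma reachable_spanningCoe_iff {K : G.Subgraph} {x y : V} (hx : x ∈ K.verts)
    (hy : y ∈ K.verts) : K.spanningCoe.Reachable x y ↔ K.coe.Reachable ⟨x, hx⟩ ⟨y, hy⟩ := by
  refine ⟨?_, fun h => h.map (⟨Subtype.val, id⟩ : K.coe →g K.spanningCoe)⟩
  rintro ⟨w⟩
  induction w with
  | nil => rfl
  | cons h _ ih =>
    exact (Adj.reachable (show K.coe.Adj ⟨_, hx⟩ ⟨_, K.edge_vert h.symm⟩ from h)).trans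
      (ih _ hy)

lemma Connected.reachable_spanningCoe {K : G.Subgraph} (hK : K.Connected) {x y : V}
    (hx : x ∈ K.verts) (hy : y ∈ K.verts) : K.spanningCoe.Reachable x y :=
  (reachable_spanningCoe_iff hx hy).2 (hK ⟨x, hx⟩ ⟨y, hy⟩)

lemma connected_of_forall_reachable_spanningCoe {K : G.Subgraph} {x : V} (hx : x ∈ K.verts)
    (h : ∀ y ∈ K.verts, K.spanningCoe.Reachable x y) : K.Connected := by
  rw [Subgraph.connected_iff, Subgraph.preconnected_iff]
  refine ⟨fun u v => ?_, ⟨x, hx⟩⟩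
  rw [← reachable_spanningCoe_iff]
  exact (h u u.2).symm.trans (h v v.2)

lemma deleteEdges_mono {A M : G.Subgraph} (h : A ≤ M) (s : Set (Sym2 V)) :
    A.deleteEdges s ≤ M.deleteEdges s :=
  ⟨h.1, fun _ _ hab => ⟨h.2 hab.1, hab.2⟩⟩

lemma deleteEdges_singleton_of_notMem {K : G.Subgraph} {e : Sym2 V} (he : e ∉ K.edgeSet) :
    K.deleteEdges {e} = K :=
  le_antisymm (deleteEdges_le _) ⟨subset_rfl, fun _ _ hab =>
    ⟨hab, fun h => he ((Set.mem_singleton_iff.1 h) ▸ hab)⟩⟩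

end SimpleGraph.Subgraph

lemma Set.finsum_mem_ncard_le {ι α : Type*} {S : Set ι} {f : ι → Set α} {T : Set α}
    (hS : S.Finite) (hT : T.Finite) (hdisj : S.PairwiseDisjoint f) (hsub : ∀ i ∈ S, f i ⊆ T) :
    ∑ᶠ i ∈ S, (f i).ncard ≤ T.ncard := by
  rw [← hS.ncard_biUnion (fun i hi => hT.subset (hsub i hi)) hdisj]
  exact Set.ncard_le_ncard (Set.iUnion₂_subset hsub) hT

lemma Set.mul_ncard_add_le_finsum_mem {ι : Type*} {S : Set ι} (hS : S.Finite) {f : ι → ℕ}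
    {m d : ℕ} (hm : ∀ i ∈ S, m ≤ f i) {i j : ι} (hi : i ∈ S) (hj : j ∈ S) (hij : i ≠ j)
    (hfi : m + d ≤ f i) (hfj : m + d ≤ f j) : m * S.ncard + 2 * d ≤ ∑ᶠ k ∈ S, f k := by
  rw [finsum_mem_eq_finite_toFinset_sum _ hS, Set.ncard_eq_toFinset_card S hS]
  have hij_s : {i, j} ⊆ hS.toFinset := by simp [Set.insert_subset_iff, hi, hj]
  have hrest := Finset.card_nsmul_le_sum (hS.toFinset \ {i, j}) f m
    fun k hk => hm k (by simpa using (Finset.mem_sdiff.1 hk).1)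
  rw [← Finset.sum_sdiff hij_s, Finset.sum_pair hij, ← Finset.card_sdiff_add_card_eq_card hij_s,
    Finset.card_pair hij]
  rw [smul_eq_mul] at hrest
  nlinarith

namespace ECSS

variable {V : Type*} {G : SimpleGraph V}

lemma SubTwoEC.deleteEdges_connected {K : G.Subgraph} (hK : SubTwoEC K) (e : Sym2 V) :
    (K.deleteEdges {e}).Connected := by
  by_cases he : e ∈ K.edgeSet
  · exact hK.2 e he
  · rw [Subgraph.deleteEdges_singleton_of_notMem he]
    exact hK.1

lemma SubTwoEC.sup {A B : G.Subgraph} (hA : SubTwoEC A) (hB : SubTwoEC B)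
    (hAB : (A.verts ∩ B.verts).Nonempty) : SubTwoEC (A ⊔ B) := by
  refine ⟨Subgraph.connected_sup hA.1.preconnected hB.1.preconnected hAB, fun e _ => ?_⟩
  have hsup : (A ⊔ B).deleteEdges {e} = A.deleteEdges {e} ⊔ B.deleteEdges {e} := by
    ext <;> simp [or_and_right]
  rw [hsup]
  exact Subgraph.connected_sup (hA.deleteEdges_connected e).preconnected
    (hB.deleteEdges_connected e).preconnected hAB

/-- The invariant of a chain of blocks from `p` to `q`; closed by an edge `pq`, such a chain
becomes 2-edge-connected. -/
def IsEdgeRobust (K : G.Subgraph) (p q : V) : Prop :=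
  ∀ e : Sym2 V, ∀ v ∈ K.verts,
    (K.deleteEdges {e}).spanningCoe.Reachable p v ∨ (K.deleteEdges {e}).spanningCoe.Reachable q v

lemma IsEdgeRobust.sup_subgraphOfAdj_sup {P K : G.Subgraph} {p a b q : V} (hP : SubTwoEC P)
    (hp : p ∈ P.verts) (ha : a ∈ P.verts) (haK : a ∉ K.verts) (hab : G.Adj a b)
    (hbq : K.spanningCoe.Reachable b q) (hK : IsEdgeRobust K b q) :
    IsEdgeRobust (P ⊔ G.subgraphOfAdj hab ⊔ K) p q := by
  intro e v hv
  set M := P ⊔ G.subgraphOfAdj hab ⊔ K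
  have mono : ∀ {N : G.Subgraph}, N ≤ M →
      (N.deleteEdges {e}).spanningCoe ≤ (M.deleteEdges {e}).spanningCoe :=
    fun h => Subgraph.spanningCoe_le_of_le (Subgraph.deleteEdges_mono h _)
  have hPM : P ≤ M := le_sup_left.trans le_sup_left
  have hKM : K ≤ M := le_sup_right
  have hP' : ∀ x ∈ P.verts, (M.deleteEdges {e}).spanningCoe.Reachable p x := fun x hx =>
    ((hP.deleteEdges_connected e).reachable_spanningCoe hp hx).mono (mono hPM)
  simp only [M, Subgraph.verts_sup, subgraphOfAdj_verts, Set.mem_union, Set.mem_insert_iff,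
    Set.mem_singleton_iff] at hv
  by_cases he : e = s(a, b)
  · have hKe : K.deleteEdges {e} = K := Subgraph.deleteEdges_singleton_of_notMem
      (fun h => haK (K.edge_vert (by rw [he] at h; exact h)))
    have hqb : (M.deleteEdges {e}).spanningCoe.Reachable q b := by
      rw [← hKe] at hbq
      exact (hbq.mono (mono hKM)).symm
    rcases hv with (hv | rfl | rfl) | hv
    · exact .inl (hP' v hv)
    · exact .inl (hP' v ha)
    · exact .inr hqb
    · exact .inr ((hK e v hv).elim (fun h => hqb.trans (h.mono (mono hKM))) (·.mono (mono hKM)))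
  · have hpb : (M.deleteEdges {e}).spanningCoe.Reachable p b :=
      (hP' a ha).trans (Adj.reachable (by simp [M, Ne.symm he]))
    rcases hv with (hv | rfl | rfl) | hv
    · exact .inl (hP' v hv)
    · exact .inl (hP' v ha)
    · exact .inl hpb
    · exact (hK e v hv).imp (fun h => hpb.trans (h.mono (mono hKM))) (·.mono (mono hKM))

lemma subTwoEC_sup_subgraphOfAdj {K : G.Subgraph} {p q : V} (hp : p ∈ K.verts)
    (hpq : K.spanningCoe.Reachable p q) (hK : IsEdgeRobust K p q) (hpqK : s(p, q) ∉ K.edgeSet)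
    (hadj : G.Adj p q) : SubTwoEC (K ⊔ G.subgraphOfAdj hadj) := by
  set M := K ⊔ G.subgraphOfAdj hadj
  have hdel : ∀ e, (M.deleteEdges {e}).Connected := by
    intro e
    have mono : (K.deleteEdges {e}).spanningCoe ≤ (M.deleteEdges {e}).spanningCoe :=
      Subgraph.spanningCoe_le_of_le (Subgraph.deleteEdges_mono le_sup_left _)
    have hq : (M.deleteEdges {e}).spanningCoe.Reachable p q := by
      by_cases he : e = s(p, q)
      · rw [← Subgraph.deleteEdges_singleton_of_notMem (K := K) (e := e) (by rwa [he])] at hpq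
        exact hpq.mono mono
      · exact Adj.reachable (by simp [M, Ne.symm he])
    refine Subgraph.connected_of_forall_reachable_spanningCoe (Or.inl hp) fun v hv => ?_
    simp only [M, Subgraph.deleteEdges_verts, Subgraph.verts_sup, subgraphOfAdj_verts,
      Set.mem_union, Set.mem_insert_iff, Set.mem_singleton_iff] at hv
    rcases hv with hv | rfl | rfl
    · exact (hK e v hv).elim (·.mono mono) (fun h => hq.trans (h.mono mono))
    · rfl
    · exact hq
  exact ⟨(hdel s(p, p)).mono (Subgraph.deleteEdges_le _) rfl, fun e _ => hdel e⟩

lemma eq_of_maximal_of_mem_verts {P : G.Subgraph → Prop}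
    (hP : ∀ A B, P A → P B → (A.verts ∩ B.verts).Nonempty → P (A ⊔ B)) {C A B : G.Subgraph}
    (hA : A ≤ C ∧ P A ∧ ∀ A', A ≤ A' → A' ≤ C → P A' → A' = A)
    (hB : B ≤ C ∧ P B ∧ ∀ B', B ≤ B' → B' ≤ C → P B' → B' = B) {v : V}
    (hvA : v ∈ A.verts) (hvB : v ∈ B.verts) : A = B := by
  have hAB := hP A B hA.2.1 hB.2.1 ⟨v, hvA, hvB⟩
  exact (hA.2.2 _ le_sup_left (sup_le hA.1 hB.1) hAB).symm.trans
    (hB.2.2 _ le_sup_right (sup_le hA.1 hB.1) hAB)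

lemma IsComponent.eq_of_mem_verts {H A B : G.Subgraph} (hA : IsComponent H A)
    (hB : IsComponent H B) {v : V} (hvA : v ∈ A.verts) (hvB : v ∈ B.verts) : A = B :=
  eq_of_maximal_of_mem_verts
    (fun _ _ hA hB => Subgraph.connected_sup hA.preconnected hB.preconnected) hA hB hvA hvB

lemma IsBlock.eq_of_mem_verts {C A B : G.Subgraph} (hA : IsBlock C A) (hB : IsBlock C B)
    {v : V} (hvA : v ∈ A.verts) (hvB : v ∈ B.verts) : A = B :=
  eq_of_maximal_of_mem_verts (fun _ _ hA hB => hA.sup hB) hA hB hvA hvB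

lemma pairwiseDisjoint_edgeSet {S : Set G.Subgraph}
    (h : ∀ A ∈ S, ∀ B ∈ S, ∀ v ∈ A.verts, v ∈ B.verts → A = B) :
    S.PairwiseDisjoint Subgraph.edgeSet := by
  intro A hA B hB hne
  rw [Function.onFun, Set.disjoint_left]
  intro e heA heB
  induction e using Sym2.ind with
  | _ x y => exact hne (h A hA B hB x (A.edge_vert heA) (B.edge_vert heB))

lemma exists_isBlock_mem [Finite V] {C : G.Subgraph} {v : V} (hv : v ∈ C.verts) :
    ∃ B, IsBlock C B ∧ v ∈ B.verts := by
  have hv' : SubTwoEC (G.singletonSubgraph v) :=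
    ⟨Subgraph.singletonSubgraph_connected, fun e he => by simp at he⟩
  obtain ⟨B, ⟨hvB, hBC, hB⟩, hmax⟩ := Set.Finite.exists_maximalFor id
    {B : G.Subgraph | G.singletonSubgraph v ≤ B ∧ B ≤ C ∧ SubTwoEC B} (Set.toFinite _)
    ⟨_, le_rfl, (singletonSubgraph_le_iff v C).2 hv, hv'⟩
  exact ⟨B, ⟨hBC, hB, fun B' hBB' hB'C hB' =>
    le_antisymm (hmax ⟨hvB.trans hBB', hB'C, hB'⟩ hBB') hBB'⟩, hvB.1 rfl⟩

lemma IsBlock.reachable_deleteEdges {C B : G.Subgraph} (hB : IsBlock C B) (e : Sym2 V)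
    {x y : V} (hx : x ∈ B.verts) (hy : y ∈ B.verts) :
    (C.deleteEdges {e}).spanningCoe.Reachable x y :=
  ((hB.2.1.deleteEdges_connected e).reachable_spanningCoe hx hy).mono
    (Subgraph.spanningCoe_le_of_le (Subgraph.deleteEdges_mono hB.1 _))

lemma IsBridgeIn.notMem_verts {C B : G.Subgraph} {a b : V} (he : IsBridgeIn C s(a, b))
    (hB : IsBlock C B) (ha : a ∈ B.verts) : b ∉ B.verts :=
  fun hb => he.2 a b rfl (hB.reachable_deleteEdges _ ha hb)

lemma IsBridgeIn.notMem_edgeSet {C B : G.Subgraph} {e : Sym2 V} (he : IsBridgeIn C e)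
    (hB : IsBlock C B) : e ∉ B.edgeSet := by
  induction e using Sym2.ind with
  | _ a b => exact fun h => he.notMem_verts hB (B.edge_vert h) (B.edge_vert h.symm)

abbrev Blocks (C : G.Subgraph) : Type _ := {B : G.Subgraph // IsBlock C B}

lemma Blocks.eq_of_mem_verts {C : G.Subgraph} {A B : Blocks C} {v : V} (hvA : v ∈ A.1.verts)
    (hvB : v ∈ B.1.verts) : A = B :=
  Subtype.ext (A.2.eq_of_mem_verts B.2 hvA hvB)

def blockGraph (C : G.Subgraph) : SimpleGraph (Blocks C) where
  Adj A B := A ≠ B ∧ ∃ a ∈ A.1.verts, ∃ b ∈ B.1.verts, C.Adj a b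
  symm := ⟨fun _ _ ⟨hne, a, ha, b, hb, hab⟩ => ⟨hne.symm, b, hb, a, ha, hab.symm⟩⟩
  loopless := ⟨fun _ h => h.1 rfl⟩

lemma blockGraph_reachable [Finite V] {C : G.Subgraph} {x y : V} (w : C.spanningCoe.Walk x y)
    {A B : Blocks C} (hx : x ∈ A.1.verts) (hy : y ∈ B.1.verts) :
    (blockGraph C).Reachable A B := by
  induction w generalizing A with
  | nil => rw [Blocks.eq_of_mem_verts hx hy]
  | cons h _ ih =>
    obtain ⟨A', hA', hzA'⟩ := exists_isBlock_mem (C.edge_vert h.symm)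
    refine (?_ : (blockGraph C).Reachable A ⟨A', hA'⟩).trans (ih hzA' hy)
    by_cases hAA' : A = ⟨A', hA'⟩
    · rw [hAA']
    · exact Adj.reachable ⟨hAA', _, hx, _, hzA', h⟩

lemma blockGraph_connected [Finite V] {C : G.Subgraph} (hC : C.Connected) :
    (blockGraph C).Connected := by
  obtain ⟨B, hB, -⟩ := exists_isBlock_mem hC.nonempty.some_mem
  have : Nonempty (Blocks C) := ⟨⟨B, hB⟩⟩
  refine ⟨fun A B => ?_⟩
  obtain ⟨a, ha⟩ := A.2.2.1.1.nonempty
  obtain ⟨b, hb⟩ := B.2.2.1.1.nonempty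
  obtain ⟨w⟩ := hC.reachable_spanningCoe (A.2.1.1 ha) (B.2.1.1 hb)
  exact blockGraph_reachable w ha hb

/-- The properties used of the union `K` of the blocks along `w` together with one edge of `C`
joining each two consecutive blocks. -/
structure IsBlockChain {C : G.Subgraph} {P Q : Blocks C} (w : (blockGraph C).Walk P Q)
    (K : G.Subgraph) (p q : V) : Prop where
  le : K ≤ C
  start_le : P.1 ≤ K
  reachable : K.spanningCoe.Reachable p q
  edgeRobust : IsEdgeRobust K p q
  exists_mem_support : ∀ v ∈ K.verts, ∃ R ∈ w.support, v ∈ R.1.verts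
  adj_mem_edges : ∀ ⦃x y : V⦄, K.Adj x y → ∀ R S : Blocks C, x ∈ R.1.verts → y ∈ S.1.verts →
    R = S ∨ s(R, S) ∈ w.edges

lemma isBlockChain_nil {C : G.Subgraph} (P : Blocks C) {p q : V} (hp : p ∈ P.1.verts)
    (hq : q ∈ P.1.verts) : IsBlockChain (Walk.nil : (blockGraph C).Walk P P) P.1 p q where
  le := P.2.1
  start_le := le_rfl
  reachable := P.2.2.1.1.reachable_spanningCoe hp hq
  edgeRobust e _ hv := .inl ((P.2.2.1.deleteEdges_connected e).reachable_spanningCoe hp hv)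
  exists_mem_support v hv := ⟨P, by simp, hv⟩
  adj_mem_edges x y hxy R S hx hy := .inl ((Blocks.eq_of_mem_verts hx (P.1.edge_vert hxy)).trans
    (Blocks.eq_of_mem_verts (P.1.edge_vert hxy.symm) hy))

lemma IsBlockChain.cons {C : G.Subgraph} {P R Q : Blocks C} {w : (blockGraph C).Walk R Q}
    {K : G.Subgraph} {p a b q : V} (hK : IsBlockChain w K b q) (hPw : P ∉ w.support)
    (hPR : (blockGraph C).Adj P R) (hp : p ∈ P.1.verts) (ha : a ∈ P.1.verts)
    (hb : b ∈ R.1.verts) (hab : C.Adj a b) :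
    IsBlockChain (w.cons hPR) (P.1 ⊔ G.subgraphOfAdj (C.adj_sub hab) ⊔ K) p q := by
  have haK : a ∉ K.verts := fun haK => by
    obtain ⟨R', hR', haR'⟩ := hK.exists_mem_support a haK
    exact hPw (Blocks.eq_of_mem_verts ha haR' ▸ hR')
  refine ⟨sup_le (sup_le P.2.1 (subgraphOfAdj_le_of_adj C hab)) hK.le,
    le_sup_left.trans le_sup_left, ?_,
    hK.edgeRobust.sup_subgraphOfAdj_sup P.2.2.1 hp ha haK _ hK.reachable, ?_, ?_⟩
  · exact ((P.2.2.1.1.reachable_spanningCoe hp ha).mono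
      (Subgraph.spanningCoe_le_of_le (le_sup_left.trans le_sup_left))).trans
      ((Adj.reachable (by simp [hab.ne])).trans
        (hK.reachable.mono (Subgraph.spanningCoe_le_of_le le_sup_right)))
  · intro v hv
    simp only [Subgraph.verts_sup, subgraphOfAdj_verts, Set.mem_union, Set.mem_insert_iff,
      Set.mem_singleton_iff] at hv
    rcases hv with (hv | rfl | rfl) | hv
    · exact ⟨P, by simp, hv⟩
    · exact ⟨P, by simp, ha⟩
    · exact ⟨R, by simp, hb⟩
    · obtain ⟨R', hR', hvR'⟩ := hK.exists_mem_support v hv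
      exact ⟨R', by simp [hR'], hvR'⟩
  · intro x y hxy S T hx hy
    simp only [Subgraph.sup_adj, subgraphOfAdj_adj, Sym2.eq_iff] at hxy
    rcases hxy with (hxy | ⟨rfl, rfl⟩ | ⟨rfl, rfl⟩) | hxy
    · exact .inl ((Blocks.eq_of_mem_verts hx (P.1.edge_vert hxy)).trans
        (Blocks.eq_of_mem_verts (P.1.edge_vert hxy.symm) hy))
    · rw [Blocks.eq_of_mem_verts hx ha, Blocks.eq_of_mem_verts hy hb]
      exact .inr (by simp)
    · rw [Blocks.eq_of_mem_verts hx hb, Blocks.eq_of_mem_verts hy ha]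
      exact .inr (by simp [Sym2.eq_swap])
    · exact (hK.adj_mem_edges hxy S T hx hy).imp_right (by simp_all)

lemma exists_isBlockChain {C : G.Subgraph} {P Q : Blocks C} (w : (blockGraph C).Walk P Q)
    (hw : w.IsPath) {p q : V} (hp : p ∈ P.1.verts) (hq : q ∈ Q.1.verts) :
    ∃ K, IsBlockChain w K p q := by
  induction w generalizing p with
  | nil => exact ⟨_, isBlockChain_nil _ hp hq⟩
  | cons hPR w ih =>
    rw [Walk.cons_isPath_iff] at hw
    obtain ⟨-, a, ha, b, hb, hab⟩ := id hPR
    obtain ⟨K, hK⟩ := ih hw.1 hb hq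
    exact ⟨_, hK.cons hw.2 hPR hp ha hb hab⟩

lemma blockGraph_isAcyclic (C : G.Subgraph) : (blockGraph C).IsAcyclic := by
  rw [isAcyclic_iff_forall_adj_isBridge]
  intro A B hAB
  rw [isBridge_iff_forall_walk_mem_edges]
  by_contra! ⟨w, hw⟩
  obtain ⟨hne, a, ha, b, hb, hab⟩ := hAB
  obtain ⟨K, hK⟩ := exists_isBlockChain w.toPath.1 w.toPath.2 ha hb
  have habK : s(a, b) ∉ K.edgeSet := fun h =>
    (hK.adj_mem_edges h A B ha hb).elim hne fun h' => hw (w.edges_toPath_subset_edges h')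
  -- closing the chain by `ab` gives a 2-edge-connected subgraph strictly larger than `A`
  have hM := subTwoEC_sup_subgraphOfAdj (hK.start_le.1 ha) hK.reachable hK.edgeRobust habK
    (C.adj_sub hab)
  have hMA := A.2.2.2 _ (hK.start_le.trans le_sup_left)
    (sup_le hK.le (subgraphOfAdj_le_of_adj C hab)) hM
  exact hne (Blocks.eq_of_mem_verts (hMA ▸ Or.inr (by simp) : b ∈ A.1.verts) hb)

lemma isPendant_of_subsingleton_neighborSet [Finite V] {C : G.Subgraph} (hC : C.Connected)
    {L B : Blocks C} (hL : ((blockGraph C).neighborSet L).Subsingleton) (hBL : B ≠ L) :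
    IsPendant C L.1 := by
  obtain ⟨z, hz⟩ := B.2.2.1.1.nonempty
  refine Subgraph.connected_of_forall_reachable_spanningCoe
    ⟨B.2.1.1 hz, fun h => hBL (Blocks.eq_of_mem_verts hz h)⟩ fun y ⟨hyC, hyL⟩ => ?_
  obtain ⟨By, hBy, hyBy⟩ := exists_isBlock_mem hyC
  have hByL : (⟨By, hBy⟩ : Blocks C) ≠ L := fun h => hyL (h ▸ hyBy)
  obtain ⟨w, hw⟩ := (blockGraph_connected hC).exists_isPath B ⟨By, hBy⟩
  have hLw : L ∉ w.support :=
    hw.isTrail.not_mem_support_of_subsingleton_neighborSet hBL.symm hByL.symm hL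
  obtain ⟨K, hK⟩ := exists_isBlockChain w hw hz hyBy
  have hKL : ∀ v ∈ K.verts, v ∉ L.1.verts := fun v hv hvL => by
    obtain ⟨R, hR, hvR⟩ := hK.exists_mem_support v hv
    exact hLw (Blocks.eq_of_mem_verts hvR hvL ▸ hR)
  have hKCL : K ≤ C.deleteVerts L.1.verts :=
    ⟨fun v hv => ⟨hK.le.1 hv, hKL v hv⟩, fun u v huv => by
      simp only [Subgraph.deleteVerts_adj]
      exact ⟨hK.le.1 (K.edge_vert huv), hKL u (K.edge_vert huv),
        hK.le.1 (K.edge_vert huv.symm), hKL v (K.edge_vert huv.symm), hK.le.2 huv⟩⟩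
  exact hK.reachable.mono (Subgraph.spanningCoe_le_of_le hKCL)

lemma exists_two_pendant_blocks [Finite V] {C : G.Subgraph} (hC : C.Connected)
    (hbr : HasBridge C) :
    ∃ B₁ B₂, IsBlock C B₁ ∧ IsBlock C B₂ ∧ B₁ ≠ B₂ ∧ IsPendant C B₁ ∧ IsPendant C B₂ := by
  obtain ⟨e, he⟩ := hbr
  induction e using Sym2.ind with
  | _ a b =>
  obtain ⟨Ba, hBa, haBa⟩ := exists_isBlock_mem (C.edge_vert he.1)
  obtain ⟨Bb, hBb, hbBb⟩ := exists_isBlock_mem (C.edge_vert he.1.symm)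
  have : Nontrivial (Blocks C) := ⟨⟨Ba, hBa⟩, ⟨Bb, hBb⟩, fun h =>
    he.notMem_verts hBa haBa (by rwa [Subtype.mk.inj h])⟩
  have : Fintype (Blocks C) := Fintype.ofFinite _
  obtain ⟨L₁, L₂, hne, h₁, h₂⟩ :=
    IsTree.exists_ne_and_degree_eq_one ⟨blockGraph_connected hC, blockGraph_isAcyclic C⟩
  have leaf : ∀ {L}, (blockGraph C).degree L = 1 → ((blockGraph C).neighborSet L).Subsingleton :=
    fun h _ hx _ hy => (degree_eq_one_iff_existsUnique_adj.1 h).unique hx hy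
  exact ⟨L₁.1, L₂.1, L₁.2, L₂.2, fun h => hne (Subtype.ext h),
    isPendant_of_subsingleton_neighborSet hC (leaf h₁) hne.symm,
    isPendant_of_subsingleton_neighborSet hC (leaf h₂) hne⟩

lemma four_add_le_ncard_edgeSet [Finite V] {H C : G.Subgraph} (hC : IsComponent H C)
    (hcan : IsCanonical H) (hbr : HasBridge C) :
    4 + 4 * {B | IsBlock C B}.ncard + {e | IsBridgeIn C e}.ncard ≤ C.edgeSet.ncard := by
  obtain ⟨B₁, B₂, hB₁, hB₂, hne, hP₁, hP₂⟩ := exists_two_pendant_blocks hC.2.1 hbr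
  have hsize := hcan.2 C hC hbr
  have hlow : 4 * {B | IsBlock C B}.ncard + 2 * 2
      ≤ ∑ᶠ B ∈ {B | IsBlock C B}, B.edgeSet.ncard := by
    refine Set.mul_ncard_add_le_finsum_mem (Set.toFinite _) (fun B hB => ?_) hB₁ hB₂ hne
      ((hsize _ hB₁).1 hP₁) ((hsize _ hB₂).1 hP₂)
    by_cases hP : IsPendant C B
    · exact le_trans (by norm_num) ((hsize B hB).1 hP)
    · exact (hsize B hB).2 hP
  have hbridges : {e | IsBridgeIn C e} ⊆ C.edgeSet := fun _ he => he.1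
  have hup : ∑ᶠ B ∈ {B | IsBlock C B}, B.edgeSet.ncard
      ≤ (C.edgeSet \ {e | IsBridgeIn C e}).ncard :=
    Set.finsum_mem_ncard_le (Set.toFinite _) (Set.toFinite _)
      (pairwiseDisjoint_edgeSet fun _ hA _ hB _ => hA.eq_of_mem_verts hB)
      fun B hB _ he => ⟨Subgraph.edgeSet_mono hB.1 he, fun hbr => hbr.notMem_edgeSet hB he⟩
  rw [Set.ncard_sdiff hbridges] at hup
  have := Set.ncard_le_ncard hbridges
  omega

lemma componentCredit_le [Finite V] {H C : G.Subgraph} (hC : IsComponent H C)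
    (hcan : IsCanonical H) : componentCredit C ≤ (C.edgeSet.ncard : ℚ) / 4 := by
  unfold componentCredit
  split_ifs with hbr h8
  · have : (4 + 4 * {B | IsBlock C B}.ncard + {e | IsBridgeIn C e}.ncard : ℚ)
        ≤ C.edgeSet.ncard := by
      exact_mod_cast four_add_le_ncard_edgeSet hC hcan hbr
    linarith
  · have : (8 : ℚ) ≤ C.edgeSet.ncard := by exact_mod_cast h8
    linarith
  · exact le_rfl

lemma finsum_mem_ncard_edgeSet_le [Finite V] (H : G.Subgraph) :
    ∑ᶠ C ∈ {C | IsComponent H C}, C.edgeSet.ncard ≤ H.edgeSet.ncard :=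
  Set.finsum_mem_ncard_le (Set.toFinite _) (Set.toFinite _)
    (pairwiseDisjoint_edgeSet fun _ hA _ hB _ => hA.eq_of_mem_verts hB)
    fun _ hC => Subgraph.edgeSet_mono hC.1

lemma credit_le [Finite V] {H : G.Subgraph} (hcan : IsCanonical H) :
    credit H ≤ (H.edgeSet.ncard : ℚ) / 4 := by
  have hS : {C : G.Subgraph | IsComponent H C}.Finite := Set.toFinite _
  have hsum := finsum_mem_ncard_edgeSet_le H
  rw [finsum_mem_eq_finite_toFinset_sum _ hS] at hsum
  calc credit H = ∑ C ∈ hS.toFinset, componentCredit C := finsum_mem_eq_finite_toFinset_sum _ hS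
    _ ≤ ∑ C ∈ hS.toFinset, (C.edgeSet.ncard : ℚ) / 4 :=
      Finset.sum_le_sum fun _ hC => componentCredit_le (hS.mem_toFinset.1 hC) hcan
    _ = (∑ C ∈ hS.toFinset, C.edgeSet.ncard : ℕ) / 4 := by rw [Nat.cast_sum, Finset.sum_div]
    _ ≤ H.edgeSet.ncard / 4 := by gcongr

end ECSS

theorem statement_4_general {V : Type*} [Fintype V] {G : SimpleGraph V}
    (H : G.Subgraph) (hcan : ECSS.IsCanonical H) :
    ECSS.cost H ≤ 5 / 4 * (H.edgeSet.ncard : ℚ) := by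
  have := ECSS.credit_le hcan
  rw [ECSS.cost]
  linarith

/-- Let `H` be a canonical 2-edge cover of a graph `G`.
Then `cost(H) ≤ (5/4)·|E(H)|`. -/
theorem statement_4 {V : Type*} [Fintype V] [DecidableEq V] {G : SimpleGraph V}
    (H : G.Subgraph) (hcov : ECSS.IsTwoEdgeCover H) (hcan : ECSS.IsCanonical H) :
    ECSS.cost H ≤ 5 / 4 * (H.edgeSet.ncard : ℚ) :=
  statement_4_general H hcan
end

section
/- Let G be a graph, {u,v,w} a large 3-vertex cut of G, and (V1, V2) a partition of V(G) ∖ {u,v,w} with 7 ≤ |V1| ≤ |V2| and no edges of G between V1 and V2. Let G_1 = G[V1 ∪ {u,v,w}] and G_2 = G[V2 ∪ {u,v,w}] minus the edges uv, vw, uw. Let H ⊆ E(G) be connected and spanning in G, and let H_i = H ∩ E(G_i) for i ∈ {1,2}. If for all i ∈ {1,2} every edge e ∈ H_i is part of a 2-edge-connected component of H_i or lies on an x–y path in H_i for some distinct x, y ∈ {u,v,w} such that there also exists an x–y path in H_j (where j is the other index), then H is a 2-edge-connected spanning subgraph of G. -/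
open SimpleGraph

open scoped Classical

/-!
Since there are no `V₁`–`V₂` edges and the triangle on `{u, v, w}` is removed from `H₂`, every
edge of `H` lies in exactly one of `H₁`, `H₂`, so it suffices that no edge `ab` of `Hᵢ` is a
bridge of `H`. If `ab` lies in a 2-edge-connected component of `Hᵢ`, it is not even a bridge of
`Hᵢ`. Otherwise `ab` lies on an `x`–`y` path of `Hᵢ`, and an `x`–`y` path of `Hⱼ`, which avoids
`ab`, joins the two ends of that path: so `ab` lies on a cycle of `H`.
-/

namespace SimpleGraph

variable {V : Type*} {G : SimpleGraph V}

lemma Walk.IsTrail.not_isBridge_of_mem_edges {a b c d : V} {p : G.Walk c d} (hp : p.IsTrail)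
    (he : s(a, b) ∈ p.edges) (hcd : (G.deleteEdges {s(a, b)}).Reachable c d) :
    ¬ G.IsBridge s(a, b) := by
  rw [isBridge_iff, not_not]
  have hb : (G.deleteEdges {s(a, b)}).Reachable c b := by
    by_contra hcb
    exact hp.not_mem_edges_of_not_reachable hcb (fun hdb => hcb (hcd.trans hdb)) he
  have ha : (G.deleteEdges {s(a, b)}).Reachable c a := by
    rw [Sym2.eq_swap] at he hcd ⊢
    by_contra hca
    exact hp.not_mem_edges_of_not_reachable hca (fun hda => hca (hcd.trans hda)) he
  exact ha.symm.trans hb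

namespace Subgraph

lemma connected_iff_spanningCoe_connected {H : G.Subgraph} (hH : H.IsSpanning) :
    H.Connected ↔ H.spanningCoe.Connected := by
  rw [Subgraph.connected_iff', (H.spanningCoeEquivCoeOfSpanning hH).connected_iff]

lemma spanningCoe_le_deleteEdges_of_not_adj {H K : G.Subgraph}
    (hKH : K.spanningCoe ≤ H.spanningCoe) {a b : V} (hab : ¬ K.Adj a b) :
    K.spanningCoe ≤ H.spanningCoe.deleteEdges {s(a, b)} := by
  intro c d hcd
  refine (SimpleGraph.deleteEdges_adj ..).mpr ⟨hKH hcd, fun hmem => hab ?_⟩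
  rw [Set.mem_singleton_iff] at hmem
  rw [← Subgraph.mem_edgeSet, ← hmem]
  exact hcd

end Subgraph

end SimpleGraph

namespace ECSS

open SimpleGraph.Subgraph

variable {V : Type*} {G : SimpleGraph V}

lemma isTwoECSS_of_forall_not_isBridge {H : G.Subgraph} (hsp : H.IsSpanning)
    (hconn : H.Connected)
    (hbridge : ∀ ⦃a b : V⦄, H.Adj a b → ¬ H.spanningCoe.IsBridge s(a, b)) : IsTwoECSS G H := by
  refine ⟨hsp, hconn, fun e he => ?_⟩
  induction e using Sym2.ind with
  | _ a b =>
    have hsp' : (H.deleteEdges {s(a, b)}).IsSpanning := fun x => hsp x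
    rw [connected_iff_spanningCoe_connected hsp', ← deleteEdges_spanningCoe_eq]
    have hconn' := (connected_iff_spanningCoe_connected hsp).mp hconn
    exact hconn'.connected_delete_edge_of_not_isBridge (hbridge he)

lemma not_isBridge_of_edgeCond {H Hi Hj : G.Subgraph} {u v w : V}
    (hi : Hi.spanningCoe ≤ H.spanningCoe) (hj : Hj.spanningCoe ≤ H.spanningCoe)
    (hcond : EdgeCond Hi Hj u v w) {a b : V} (hab : Hi.Adj a b) (hab' : ¬ Hj.Adj a b) :
    ¬ H.spanningCoe.IsBridge s(a, b) := by
  rcases hcond a b hab with hsame | ⟨x, -, y, -, -, ⟨p, hp, hep⟩, hxy⟩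
  · intro hbridge
    apply hbridge.anti hi
    rw [deleteEdges_spanningCoe_eq]
    exact hsame.2 _ hab
  · refine (hp.isTrail.mapLe hi).not_isBridge_of_mem_edges ?_ ?_
    · rwa [SimpleGraph.Walk.edges_mapLe_eq_edges]
    · exact hxy.mono (spanningCoe_le_deleteEdges_of_not_adj hj hab')

theorem isTwoECSS_of_edgeCond {H H₁ H₂ : G.Subgraph} {u v w : V} (hsp : H.IsSpanning)
    (hconn : H.Connected) (h₁ : H₁.spanningCoe ≤ H.spanningCoe)
    (h₂ : H₂.spanningCoe ≤ H.spanningCoe)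
    (hcover : ∀ ⦃a b : V⦄, H.Adj a b → H₁.Adj a b ∨ H₂.Adj a b)
    (hdisj : ∀ ⦃a b : V⦄, H₁.Adj a b → ¬ H₂.Adj a b)
    (hcond₁ : EdgeCond H₁ H₂ u v w) (hcond₂ : EdgeCond H₂ H₁ u v w) : IsTwoECSS G H := by
  refine isTwoECSS_of_forall_not_isBridge hsp hconn fun a b hab => ?_
  rcases hcover hab with hab₁ | hab₂
  · exact not_isBridge_of_edgeCond h₁ h₂ hcond₁ hab₁ (hdisj hab₁)
  · exact not_isBridge_of_edgeCond h₂ h₁ hcond₂ hab₂ (fun hab₁ => hdisj hab₁ hab₂)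

section Separator

variable {H : G.Subgraph} {S V1 V2 : Set V} {D : Set (Sym2 V)}

lemma induce_adj_or_deleteEdges_induce_adj (hcover : Sᶜ ⊆ V1 ∪ V2)
    (hnoedge : ∀ a ∈ V1, ∀ b ∈ V2, ¬ G.Adj a b) (hD : ∀ x y, s(x, y) ∈ D → x ∈ S)
    {a b : V} (hab : H.Adj a b) :
    (H.induce (V1 ∪ S)).Adj a b ∨ ((H.induce (V2 ∪ S)).deleteEdges D).Adj a b := by
  have hside : ∀ x, x ∉ V1 ∪ S → x ∈ V2 ∧ x ∉ S := fun x hx =>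
    ⟨(hcover fun h => hx (Or.inr h)).resolve_left fun h => hx (Or.inl h), fun h => hx (Or.inr h)⟩
  have hnbr : ∀ x y, x ∈ V2 → G.Adj x y → y ∈ V2 ∪ S := fun x y hx hxy => by
    by_contra hy
    have hy1 : y ∈ V1 := (hcover fun h => hy (Or.inr h)).resolve_right fun h => hy (Or.inl h)
    exact hnoedge y hy1 x hx hxy.symm
  simp only [Subgraph.induce_adj, Subgraph.deleteEdges_adj]
  by_cases ha : a ∈ V1 ∪ S
  · by_cases hb : b ∈ V1 ∪ S
    · exact Or.inl ⟨ha, hb, hab⟩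
    · obtain ⟨hb2, hbS⟩ := hside b hb
      refine Or.inr ⟨⟨hnbr b a hb2 (H.adj_sub hab.symm), Or.inl hb2, hab⟩, fun h => hbS ?_⟩
      exact hD b a (Sym2.eq_swap ▸ h)
  · obtain ⟨ha2, haS⟩ := hside a ha
    exact Or.inr ⟨⟨Or.inl ha2, hnbr a b ha2 (H.adj_sub hab), hab⟩, fun h => haS (hD a b h)⟩

lemma not_deleteEdges_induce_adj_of_induce_adj (hV1 : V1 ⊆ Sᶜ) (hdisj : Disjoint V1 V2)
    (hD : ∀ x ∈ S, ∀ y ∈ S, x ≠ y → s(x, y) ∈ D) {a b : V}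
    (hab : (H.induce (V1 ∪ S)).Adj a b) : ¬ ((H.induce (V2 ∪ S)).deleteEdges D).Adj a b := by
  have hS : ∀ x, x ∈ V1 ∪ S → x ∈ V2 ∪ S → x ∈ S := by
    rintro x (hx1 | hxS) hx
    · exact absurd (hx.resolve_left (Set.disjoint_left.mp hdisj hx1)) (hV1 hx1)
    · exact hxS
  rintro ⟨⟨ha, hb, -⟩, hnot⟩
  exact hnot (hD a (hS a hab.1 ha) b (hS b hab.2.1 hb) (H.adj_sub hab.2.2).ne)

end Separator

lemma mem_of_mem_triangle {u v w x y : V}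
    (h : s(x, y) ∈ ({s(u, v), s(v, w), s(u, w)} : Set (Sym2 V))) :
    x ∈ ({u, v, w} : Set V) := by
  simp only [Set.mem_insert_iff, Set.mem_singleton_iff, Sym2.eq_iff] at h ⊢
  tauto

lemma mem_triangle {u v w x y : V} (hx : x ∈ ({u, v, w} : Set V)) (hy : y ∈ ({u, v, w} : Set V))
    (hxy : x ≠ y) : s(x, y) ∈ ({s(u, v), s(v, w), s(u, w)} : Set (Sym2 V)) := by
  simp only [Set.mem_insert_iff, Set.mem_singleton_iff, Sym2.eq_iff] at hx hy ⊢
  grind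

end ECSS

theorem statement_16_general {V : Type*} (G : SimpleGraph V)
    (u v w : V)
    (V1 V2 : Set V) (hunion : V1 ∪ V2 = ({u, v, w} : Set V)ᶜ) (hdisj : Disjoint V1 V2)
    (hnoedge : ∀ a ∈ V1, ∀ b ∈ V2, ¬ G.Adj a b)
    (H : G.Subgraph) (hsp : H.IsSpanning) (hconn : H.Connected)
    (hcond1 : ECSS.EdgeCond (H.induce (V1 ∪ {u, v, w}))
      ((H.induce (V2 ∪ {u, v, w})).deleteEdges {s(u, v), s(v, w), s(u, w)}) u v w)
    (hcond2 : ECSS.EdgeCond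
      ((H.induce (V2 ∪ {u, v, w})).deleteEdges {s(u, v), s(v, w), s(u, w)})
      (H.induce (V1 ∪ {u, v, w})) u v w) :
    ECSS.IsTwoECSS G H := by
  have hcover : ({u, v, w} : Set V)ᶜ ⊆ V1 ∪ V2 := hunion.ge
  have hV1 : V1 ⊆ ({u, v, w} : Set V)ᶜ := hunion ▸ Set.subset_union_left
  refine ECSS.isTwoECSS_of_edgeCond hsp hconn ?_ ?_ (fun _ _ hab => ?_) (fun _ _ hab => ?_)
    hcond1 hcond2
  · exact fun _ _ h => h.2.2
  · exact fun _ _ h => h.1.2.2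
  · exact ECSS.induce_adj_or_deleteEdges_induce_adj hcover hnoedge
      (fun _ _ => ECSS.mem_of_mem_triangle) hab
  · exact ECSS.not_deleteEdges_induce_adj_of_induce_adj hV1 hdisj
      (fun _ hx _ hy => ECSS.mem_triangle hx hy) hab

/-- Let `{u,v,w}` be a large 3-vertex cut of `G`, `(V1, V2)` a partition
of `V(G) ∖ {u,v,w}` with `7 ≤ |V1| ≤ |V2|` and no edges between `V1` and `V2`. Let
`H ⊆ E(G)` be connected and spanning, `H_1 = H ∩ E(G[V1 ∪ {u,v,w}])` and
`H_2 = H ∩ E(G[V2 ∪ {u,v,w}] ∖ {uv, vw, uw})`. If for each `i` every edge of `H_i` is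
in a 2-edge-connected component of `H_i` or lies on an `x`–`y` path in `H_i` for
distinct `x, y ∈ {u,v,w}` with an `x`–`y` path in the other side, then `H` is a
2-edge-connected spanning subgraph of `G`. -/
theorem statement_16 {V : Type*} [Fintype V] [DecidableEq V] (G : SimpleGraph V)
    (u v w : V) (hcut : ECSS.IsLarge3Cut G {u, v, w})
    (V1 V2 : Set V) (hunion : V1 ∪ V2 = ({u, v, w} : Set V)ᶜ) (hdisj : Disjoint V1 V2)
    (h7 : 7 ≤ V1.ncard) (h12 : V1.ncard ≤ V2.ncard)
    (hnoedge : ∀ a ∈ V1, ∀ b ∈ V2, ¬ G.Adj a b)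
    (H : G.Subgraph) (hsp : H.IsSpanning) (hconn : H.Connected)
    (hcond1 : ECSS.EdgeCond (H.induce (V1 ∪ {u, v, w}))
      ((H.induce (V2 ∪ {u, v, w})).deleteEdges {s(u, v), s(v, w), s(u, w)}) u v w)
    (hcond2 : ECSS.EdgeCond
      ((H.induce (V2 ∪ {u, v, w})).deleteEdges {s(u, v), s(v, w), s(u, w)})
      (H.induce (V1 ∪ {u, v, w})) u v w) :
    ECSS.IsTwoECSS G H :=
  statement_16_general G u v w V1 V2 hunion hdisj hnoedge H hsp hconn hcond1 hcond2
end
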